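/- Let N, R_r, S, K_c be positive integers with S < K_c ≤ R_r and S + 1 ≤ R_r, and let 𝒟 ⊆ {1,…,N} with |𝒟| ≤ N − (R_r − S − 1) − K_c. Consider the set of vectors d : {1,…,N} → ℝ that are nonnegative, satisfy d(n) ≤ 1/K_c for all n ∈ {1,…,S}∖𝒟, and satisfy ∑_{n ∈ ({1,…,N}∖𝒟)∖X} d(n) ≥ 1 for every X ⊆ {1,…,N}∖𝒟 with |X| = R_r − S − 1. Then the minimum over this set of ∑_{n ∈ {1,…,N}∖𝒟} d(n) exists and equals (N − |𝒟|)/(N − |𝒟| − R_r + S + 1); in particular, the constant vector with d(n) = 1/(N − |𝒟| − R_r + S + 1) for all n ∈ {1,…,N}∖𝒟 (and 0 elsewhere) is feasible and attains this value. -/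

import Mathlib

/-!
Averaging the constraint `1 ≤ ∑_{T \ X} d` over all `Ω`-subsets `X` of the surviving servers
`T = {1,…,N} \ 𝒟` counts each `d n` exactly `C(|T| - 1, Ω)` times, while there are `C(|T|, Ω)`
constraints; since `C(|T|, Ω) (|T| - Ω) = C(|T| - 1, Ω) |T|`, every feasible `d` has
`∑_T d ≥ |T| / (|T| - Ω)`. The constant vector `1 / (|T| - Ω)` on `T` meets every constraint with
equality, and the regime `|𝒟| + Ω + K_c ≤ N` is exactly what makes it respect the storage bound
`1 / K_c`.
-/

/-- Feasibility predicate of the download-cost linear program of Theorem 1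
(with `Ω = R_r - S - 1`). -/
def DownloadFeasible (N R_r S K_c : ℕ) (𝒟 : Finset ℕ) (d : ℕ → ℝ) : Prop :=
  (∀ n ∈ Finset.Icc 1 N, 0 ≤ d n) ∧
  (∀ n ∈ Finset.Icc 1 S \ 𝒟, d n ≤ 1 / (K_c : ℝ)) ∧
  (∀ X ⊆ Finset.Icc 1 N \ 𝒟, X.card = R_r - S - 1 →
    1 ≤ ∑ n ∈ (Finset.Icc 1 N \ 𝒟) \ X, d n)

open Finset

namespace Finset

variable {ι : Type*} [DecidableEq ι]

theorem sum_powersetCard_sum_sdiff {M : Type*} [AddCommMonoid M] (s : Finset ι) (k : ℕ)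
    (f : ι → M) :
    ∑ X ∈ s.powersetCard k, ∑ i ∈ s \ X, f i = (#s - 1).choose k • ∑ i ∈ s, f i := by
  have avoiding : ∀ i ∈ s, {X ∈ s.powersetCard k | i ∉ X} = (s.erase i).powersetCard k := by
    intro i hi
    ext X
    simp only [mem_filter, mem_powersetCard, subset_erase]
    tauto
  simp_rw [sdiff_eq_filter, sum_filter]
  rw [sum_comm, smul_sum]
  refine sum_congr rfl fun i hi => ?_
  rw [← sum_filter, avoiding i hi, sum_const, card_powersetCard, card_erase_of_mem hi]

theorem card_div_le_sum_of_one_le_sum_sdiff (s : Finset ι) {k : ℕ} (hk : k < #s) (f : ι → ℝ)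
    (h : ∀ X ⊆ s, #X = k → 1 ≤ ∑ i ∈ s \ X, f i) :
    (#s : ℝ) / (#s - k) ≤ ∑ i ∈ s, f i := by
  have hchoose : ((#s).choose k : ℝ) ≤ ((#s - 1).choose k : ℝ) * ∑ i ∈ s, f i := by
    rw [← nsmul_eq_mul, ← sum_powersetCard_sum_sdiff, ← card_powersetCard, ← nsmul_one,
      ← sum_const]
    exact sum_le_sum fun X hX => h X (mem_powersetCard.1 hX).1 (mem_powersetCard.1 hX).2
  have hident : ((#s - 1).choose k : ℝ) * #s = ((#s).choose k : ℝ) * (#s - k) := by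
    have h := Nat.choose_mul_succ_eq (#s - 1) k
    rw [Nat.sub_add_cancel (by omega)] at h
    rw [← Nat.cast_sub hk.le]
    exact_mod_cast h
  have hpos : (0 : ℝ) < #s - k := sub_pos.2 (by exact_mod_cast hk)
  have hchoose_pos : (0 : ℝ) < (#s - 1).choose k := by
    exact_mod_cast Nat.choose_pos (by omega)
  rw [div_le_iff₀ hpos]
  nlinarith

end Finset

theorem downloadFeasible_indicator {N R_r S K_c : ℕ} {𝒟 : Finset ℕ} {c : ℝ} (hc : 0 ≤ c)
    (hcK : c ≤ 1 / K_c) (hcover : 1 ≤ ((#(Icc 1 N \ 𝒟) : ℝ) - (R_r - S - 1 : ℕ)) * c) :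
    DownloadFeasible N R_r S K_c 𝒟 (fun n => if n ∈ Icc 1 N \ 𝒟 then c else 0) := by
  refine ⟨fun n _ => ?_, fun n _ => ?_, fun X hX hXcard => ?_⟩
  · dsimp only
    split_ifs
    exacts [hc, le_rfl]
  · dsimp only
    split_ifs
    exacts [hcK, by positivity]
  · rw [sum_congr rfl fun n hn => if_pos (mem_sdiff.1 hn).1, sum_const, nsmul_eq_mul,
      card_sdiff_of_subset hX, Nat.cast_sub (card_le_card hX), hXcard]
    exact hcover

theorem stmt_7_general (N R_r S K_c : ℕ) (hK : 0 < K_c)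
    (hSR : S + 1 ≤ R_r)
    (𝒟 : Finset ℕ) (h𝒟 : 𝒟 ⊆ Finset.Icc 1 N)
    (hcard : 𝒟.card + (R_r - S - 1) + K_c ≤ N) :
    IsLeast
      { s : ℝ | ∃ d : ℕ → ℝ, DownloadFeasible N R_r S K_c 𝒟 d ∧
          s = ∑ n ∈ Finset.Icc 1 N \ 𝒟, d n }
      (((N : ℝ) - 𝒟.card) / ((N : ℝ) - 𝒟.card - R_r + S + 1)) ∧
    DownloadFeasible N R_r S K_c 𝒟
      (fun n => if n ∈ Finset.Icc 1 N \ 𝒟 then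
        1 / ((N : ℝ) - 𝒟.card - R_r + S + 1) else 0) ∧
    ∑ n ∈ Finset.Icc 1 N \ 𝒟,
        (if n ∈ Finset.Icc 1 N \ 𝒟 then
          1 / ((N : ℝ) - 𝒟.card - R_r + S + 1) else 0) =
      ((N : ℝ) - 𝒟.card) / ((N : ℝ) - 𝒟.card - R_r + S + 1) := by
  set T := Icc 1 N \ 𝒟
  set Ω := R_r - S - 1
  have hT : #T = N - #𝒟 := by rw [card_sdiff_of_subset h𝒟, Nat.card_Icc, Nat.add_sub_cancel]
  have hnum : (N : ℝ) - #𝒟 = #T := by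
    rw [hT, Nat.cast_sub (by omega)]
  have hden : (N : ℝ) - #𝒟 - R_r + S + 1 = #T - Ω := by
    have hΩ : (Ω : ℝ) + S + 1 = R_r := by exact_mod_cast (by omega : Ω + S + 1 = R_r)
    linarith
  have hK_le : (K_c : ℝ) ≤ #T - Ω := by
    rw [← Nat.cast_sub (by omega)]
    exact_mod_cast (by omega : K_c ≤ #T - Ω)
  have hpos : (0 : ℝ) < #T - Ω := lt_of_lt_of_le (by exact_mod_cast hK) hK_le
  rw [hden, hnum]
  have hfeas : DownloadFeasible N R_r S K_c 𝒟 (fun n => if n ∈ T then 1 / (#T - Ω : ℝ) else 0) :=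
    downloadFeasible_indicator (by positivity)
      (one_div_le_one_div_of_le (by exact_mod_cast hK) hK_le)
      (by rw [mul_one_div, div_self hpos.ne'])
  have hsum : ∑ n ∈ T, (if n ∈ T then 1 / (#T - Ω : ℝ) else 0) = #T / (#T - Ω) := by
    rw [sum_congr rfl fun n hn => if_pos hn, sum_const, nsmul_eq_mul, mul_one_div]
  refine ⟨⟨⟨_, hfeas, hsum.symm⟩, ?_⟩, hfeas, hsum⟩
  rintro _ ⟨d, hd, rfl⟩
  exact card_div_le_sum_of_one_le_sum_sdiff T (by omega) d hd.2.2

/-- In the regime `|𝒟| ≤ N - (R_r - S - 1) - K_c`, the minimum of the download-cost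
linear program exists and equals `(N - |𝒟|)/(N - |𝒟| - R_r + S + 1)`; moreover the
constant vector `d(n) = 1/(N - |𝒟| - R_r + S + 1)` on `{1,…,N} ∖ 𝒟` (and `0` elsewhere)
is feasible and attains this value. -/
theorem stmt_7 (N R_r S K_c : ℕ) (hN : 0 < N) (hR : 0 < R_r) (hS : 0 < S) (hK : 0 < K_c)
    (hSK : S < K_c) (hKR : K_c ≤ R_r) (hSR : S + 1 ≤ R_r)
    (𝒟 : Finset ℕ) (h𝒟 : 𝒟 ⊆ Finset.Icc 1 N)
    (hcard : 𝒟.card + (R_r - S - 1) + K_c ≤ N) :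
    IsLeast
      { s : ℝ | ∃ d : ℕ → ℝ, DownloadFeasible N R_r S K_c 𝒟 d ∧
          s = ∑ n ∈ Finset.Icc 1 N \ 𝒟, d n }
      (((N : ℝ) - 𝒟.card) / ((N : ℝ) - 𝒟.card - R_r + S + 1)) ∧
    DownloadFeasible N R_r S K_c 𝒟
      (fun n => if n ∈ Finset.Icc 1 N \ 𝒟 then
        1 / ((N : ℝ) - 𝒟.card - R_r + S + 1) else 0) ∧
    ∑ n ∈ Finset.Icc 1 N \ 𝒟,
        (if n ∈ Finset.Icc 1 N \ 𝒟 then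
          1 / ((N : ℝ) - 𝒟.card - R_r + S + 1) else 0) =
      ((N : ℝ) - 𝒟.card) / ((N : ℝ) - 𝒟.card - R_r + S + 1) :=
  stmt_7_general N R_r S K_c hK hSR 𝒟 h𝒟 hcard
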